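/- If 𝒜 is a compact IRU-set of strictly positive square matrices, Ã ∈ 𝒜 attains the minimum spectral radius over 𝒜, and ṽ > 0 is the Perron eigenvector of Ã for the eigenvalue ρ(Ã), then A·ṽ ≥ ρ(Ã)·ṽ componentwise for every A ∈ 𝒜. -/

import Mathlib

open Matrix

/-- Spectral radius of a real square matrix: the maximum modulus of its complex eigenvalues. -/
noncomputable def specRad {N : ℕ} (A : Matrix (Fin N) (Fin N) ℝ) : ℝ :=
  sSup ((fun z : ℂ => ‖z‖) '' spectrum ℂ (A.map (Complex.ofReal)))

/-- The IRU-set (independent row uncertainty set) determined by row sets `rows i ⊆ ℝ^M`: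
all `N × M` matrices whose `i`-th row belongs to `rows i`. -/
def IRU {N M : ℕ} (rows : Fin N → Set (Fin M → ℝ)) : Set (Matrix (Fin N) (Fin M) ℝ) :=
  {A | ∀ i, A i ∈ rows i}

/-!
Suppose `(A ṽ)ᵢ < ρ ṽᵢ` for some `A ∈ 𝒜`, where `ρ = ρ(Ã)`. Replacing the `i`-th row of `Ã` by
that of `A` gives `B ∈ 𝒜` (rows vary independently) with `B ṽ ≤ ρ ṽ`, strictly in row `i`.
Since `B` is positive, `B² ṽ < ρ² ṽ` in every row, hence `B² ṽ ≤ c ṽ` for some `c < ρ²`.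
The Collatz–Wielandt bound then gives `ρ(B)² ≤ c < ρ²`, contradicting the minimality of `ρ`.
-/

section

variable {n : Type*} [Fintype n]

theorem mulVec_lt_mulVec_of_pos {M : Matrix n n ℝ} (hM : ∀ i j, 0 < M i j) {x y : n → ℝ}
    (hxy : ∀ j, x j ≤ y j) {i : n} (hi : x i < y i) (k : n) : (M *ᵥ x) k < (M *ᵥ y) k :=
  Finset.sum_lt_sum (fun j _ => mul_le_mul_of_nonneg_left (hxy j) (hM k j).le)
    ⟨i, Finset.mem_univ i, mul_lt_mul_of_pos_left hi (hM k i)⟩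

variable [DecidableEq n]

theorem exists_eigenvector_of_mem_spectrum {M : Matrix n n ℂ} {μ : ℂ}
    (hμ : μ ∈ spectrum ℂ M) : ∃ x : n → ℂ, x ≠ 0 ∧ M *ᵥ x = μ • x := by
  rw [← Matrix.spectrum_toLin', ← Module.End.hasEigenvalue_iff_mem_spectrum] at hμ
  obtain ⟨x, hx⟩ := hμ.exists_hasEigenvector
  exact ⟨x, hx.2, by simpa only [Matrix.toLin'_apply] using hx.apply_eq_smul⟩

/-- Collatz–Wielandt upper bound. -/
theorem norm_le_of_mem_spectrum_of_mulVec_le {M : Matrix n n ℝ} (hM : ∀ i j, 0 ≤ M i j)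
    {v : n → ℝ} (hv : ∀ i, 0 < v i) {c : ℝ} (hMv : ∀ i, (M *ᵥ v) i ≤ c * v i) {μ : ℂ}
    (hμ : μ ∈ spectrum ℂ (M.map Complex.ofReal)) : ‖μ‖ ≤ c := by
  obtain ⟨x, hx, hxμ⟩ := exists_eigenvector_of_mem_spectrum hμ
  obtain ⟨j₀, hj₀⟩ := Function.ne_iff.1 hx
  have : Nonempty n := ⟨j₀⟩
  -- `t = max ‖xⱼ‖ / vⱼ`, attained at `i`, so that `‖x‖ ≤ t v` with equality in row `i`.
  obtain ⟨i, hi⟩ := Finite.exists_max fun j => ‖x j‖ / v j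
  set t := ‖x i‖ / v i
  have hxt : ∀ j, ‖x j‖ ≤ t * v j := fun j => (div_le_iff₀ (hv j)).1 (hi j)
  have hxi : ‖x i‖ = t * v i := (div_mul_cancel₀ _ (hv i).ne').symm
  have hxi_pos : 0 < ‖x i‖ :=
    hxi ▸ mul_pos ((div_pos (norm_pos_iff.2 hj₀) (hv j₀)).trans_le (hi j₀)) (hv i)
  have ht : 0 ≤ t := div_nonneg (norm_nonneg _) (hv i).le
  refine le_of_mul_le_mul_right ?_ hxi_pos
  calc ‖μ‖ * ‖x i‖ = ‖∑ j, (M i j : ℂ) * x j‖ := by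
        rw [← norm_mul, ← smul_eq_mul, ← Pi.smul_apply μ x i, ← hxμ]; rfl
    _ ≤ ∑ j, M i j * ‖x j‖ := by
        refine (norm_sum_le _ _).trans_eq (Finset.sum_congr rfl fun j _ => ?_)
        rw [norm_mul, Complex.norm_real, Real.norm_of_nonneg (hM i j)]
    _ ≤ ∑ j, M i j * (t * v j) :=
        Finset.sum_le_sum fun j _ => mul_le_mul_of_nonneg_left (hxt j) (hM i j)
    _ = t * (M *ᵥ v) i := by
        simp only [mulVec, dotProduct, Finset.mul_sum]
        exact Finset.sum_congr rfl fun j _ => by ring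
    _ ≤ t * (c * v i) := mul_le_mul_of_nonneg_left (hMv i) ht
    _ = c * ‖x i‖ := by rw [hxi]; ring

theorem sq_mulVec_lt_of_mulVec_le {M : Matrix n n ℝ} (hM : ∀ i j, 0 < M i j) {v : n → ℝ}
    {r : ℝ} (hr : 0 ≤ r) (hMv : ∀ j, (M *ᵥ v) j ≤ r * v j) {i : n} (hi : (M *ᵥ v) i < r * v i)
    (k : n) : (M ^ 2 *ᵥ v) k < r ^ 2 * v k :=
  calc (M ^ 2 *ᵥ v) k = (M *ᵥ (M *ᵥ v)) k := by rw [sq, mulVec_mulVec]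
    _ < (M *ᵥ (r • v)) k := mulVec_lt_mulVec_of_pos hM (y := r • v) hMv hi k
    _ = r * (M *ᵥ v) k := by rw [mulVec_smul, Pi.smul_apply, smul_eq_mul]
    _ ≤ r * (r * v k) := mul_le_mul_of_nonneg_left (hMv k) hr
    _ = r ^ 2 * v k := by ring

end

theorem exists_lt_forall_le_mul_of_forall_lt_mul {ι : Type*} [Finite ι] {w v : ι → ℝ}
    (hv : ∀ k, 0 < v k) {r : ℝ} (h : ∀ k, w k < r * v k) : ∃ c < r, ∀ k, w k ≤ c * v k := by
  cases isEmpty_or_nonempty ι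
  · exact ⟨r - 1, by linarith, fun k => isEmptyElim k⟩
  · obtain ⟨k₀, hk₀⟩ := Finite.exists_max fun k => w k / v k
    exact ⟨w k₀ / v k₀, (div_lt_iff₀ (hv k₀)).2 (h k₀),
      fun k => (div_le_iff₀ (hv k)).1 (hk₀ k)⟩

theorem specRad_le_sqrt_of_sq_mulVec_le {N : ℕ} {M : Matrix (Fin N) (Fin N) ℝ}
    (hM : ∀ i j, 0 ≤ (M ^ 2) i j) {v : Fin N → ℝ} (hv : ∀ i, 0 < v i) {c : ℝ}
    (hMv : ∀ i, (M ^ 2 *ᵥ v) i ≤ c * v i) : specRad M ≤ √c := by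
  refine Real.sSup_le ?_ (Real.sqrt_nonneg c)
  rintro _ ⟨μ, hμ, rfl⟩
  have hμ2 : μ ^ 2 ∈ spectrum ℂ ((M ^ 2).map Complex.ofReal) := by
    have hmap : (M ^ 2).map Complex.ofReal = M.map Complex.ofReal ^ 2 :=
      M.map_pow Complex.ofRealHom 2
    rw [hmap]
    exact spectrum.pow_mem_pow _ 2 hμ
  exact Real.le_sqrt_of_sq_le (norm_pow μ 2 ▸ norm_le_of_mem_spectrum_of_mulVec_le hM hv hMv hμ2)

theorem updateRow_mem_IRU {N M : ℕ} {rows : Fin N → Set (Fin M → ℝ)}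
    {A : Matrix (Fin N) (Fin M) ℝ} (hA : A ∈ IRU rows) {i : Fin N} {a : Fin M → ℝ}
    (ha : a ∈ rows i) : A.updateRow i a ∈ IRU rows := by
  intro k
  rcases eq_or_ne k i with rfl | hk
  · rwa [updateRow_self]
  · rw [updateRow_ne hk]; exact hA k

theorem stmt12_general {N : ℕ} (rows : Fin N → Set (Fin N → ℝ))
    (hpos : ∀ i, ∀ a ∈ rows i, ∀ j, 0 < a j)
    (Atil : Matrix (Fin N) (Fin N) ℝ) (hAtil : Atil ∈ IRU rows)
    (hmin : ∀ A ∈ IRU rows, specRad Atil ≤ specRad A)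
    (vtil : Fin N → ℝ) (hvpos : ∀ i, 0 < vtil i)
    (hev : Atil.mulVec vtil = specRad Atil • vtil) :
    ∀ A ∈ IRU rows, ∀ i, specRad Atil * vtil i ≤ A.mulVec vtil i := by
  intro A hA i
  by_contra! hlt
  set ρ := specRad Atil
  have hρv : ∀ k, (Atil *ᵥ vtil) k = ρ * vtil k := fun k => by rw [hev]; rfl
  have hρ : 0 < ρ := by
    have h := mulVec_lt_mulVec_of_pos (fun k j => hpos k _ (hAtil k) j) (x := 0)
      (fun j => (hvpos j).le) (hvpos i) i
    rw [mulVec_zero, hρv, Pi.zero_apply] at h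
    exact pos_of_mul_pos_left h (hvpos i).le
  set B := Atil.updateRow i (A i)
  have hB : B ∈ IRU rows := updateRow_mem_IRU hAtil (hA i)
  have hBpos : ∀ k j, 0 < B k j := fun k j => hpos k _ (hB k) j
  have hBvi : (B *ᵥ vtil) i < ρ * vtil i := by
    simpa only [mulVec, B, updateRow_self] using hlt
  have hBv : ∀ k, (B *ᵥ vtil) k ≤ ρ * vtil k := by
    intro k
    rcases eq_or_ne k i with rfl | hk
    · exact hBvi.le
    · simpa only [mulVec, B, updateRow_ne hk] using (hρv k).le
  obtain ⟨c, hcρ, hc⟩ := exists_lt_forall_le_mul_of_forall_lt_mul hvpos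
    (sq_mulVec_lt_of_mulVec_le hBpos hρ.le hBv hBvi)
  have hB2 : ∀ k j, 0 ≤ (B ^ 2) k j := fun k j => by
    rw [sq, mul_apply]; exact Finset.sum_nonneg fun l _ => (mul_pos (hBpos k l) (hBpos l j)).le
  have hρB : ρ ≤ √c := (hmin B hB).trans (specRad_le_sqrt_of_sq_mulVec_le hB2 hvpos hc)
  exact lt_irrefl ρ (hρB.trans_lt ((Real.sqrt_lt' hρ).2 hcρ))

theorem stmt12 {N : ℕ} (rows : Fin N → Set (Fin N → ℝ))
    (hne : ∀ i, (rows i).Nonempty) (hcomp : ∀ i, IsCompact (rows i))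
    (hpos : ∀ i, ∀ a ∈ rows i, ∀ j, 0 < a j)
    (Atil : Matrix (Fin N) (Fin N) ℝ) (hAtil : Atil ∈ IRU rows)
    (hmin : ∀ A ∈ IRU rows, specRad Atil ≤ specRad A)
    (vtil : Fin N → ℝ) (hvpos : ∀ i, 0 < vtil i)
    (hev : Atil.mulVec vtil = specRad Atil • vtil) :
    ∀ A ∈ IRU rows, ∀ i, specRad Atil * vtil i ≤ A.mulVec vtil i :=
  stmt12_general rows hpos Atil hAtil hmin vtil hvpos hev
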